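/- arXiv:math/0008020 — 4 statements merged into one kernel-verified Lean document; each statement's English description precedes it below -/
import Mathlib

section
/- Let n ≥ 1 and let a, b be partitions of n. Then a^{↓1}, b^{↓1} and (inf_{L_B(n)}(a,b))^{↓1} are partitions of n+1, and in the dominance lattice L_B(n+1) one has inf(a^{↓1}, b^{↓1}) = (inf_{L_B(n)}(a,b))^{↓1}. -/
/-!
Partitions are modelled as functions `s : ℕ → ℕ` (0-based: `s 0` is the first
part `s_1`), nonincreasing and eventually zero.  A paper index `i ≥ 1`
(columns, transitions `→_i`, increments `s^{↓i}`) corresponds to the Lean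
index `i - 1`.
-/

/-- `s` is a partition: nonincreasing and eventually zero. -/
def IsPartition (s : ℕ → ℕ) : Prop :=
  (∀ i, s (i + 1) ≤ s i) ∧ ∃ N, ∀ i, N ≤ i → s i = 0

/-- `j`-th suffix sum (0-based: `suff s 0` is the total sum `|s|`,
`suff s (j-1)` is the paper's `Σ_j`). -/
noncomputable def suff (s : ℕ → ℕ) (j : ℕ) : ℕ := ∑' i, s (j + i)

/-- `s` is a partition of `n`. -/
noncomputable def IsPartOf (n : ℕ) (s : ℕ → ℕ) : Prop := IsPartition s ∧ suff s 0 = n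

/-- Prefix sum of the first `j` parts. -/
def psum (s : ℕ → ℕ) (j : ℕ) : ℕ := ∑ i ∈ Finset.range j, s i

/-- Dominance ordering: `Dom s t` means `s ≥ t`, i.e. every prefix sum of `s`
is at least the corresponding prefix sum of `t`. -/
def Dom (s t : ℕ → ℕ) : Prop := ∀ j, psum t j ≤ psum s j

/-- `s^{↓(i+1)}`: add one grain on the (0-based) `i`-th column. -/
def incr (s : ℕ → ℕ) (i : ℕ) : ℕ → ℕ := Function.update s i (s i + 1)

/-- Move one grain from column `a` to column `b` (0-based). -/
def moveGrain (s : ℕ → ℕ) (a b : ℕ) : ℕ → ℕ :=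
  fun j => if j = a then s a - 1 else if j = b then s b + 1 else s j

/-- `s` has a cliff at (0-based) column `i`: `s_i ≥ s_{i+1} + 2`. -/
def Cliff (s : ℕ → ℕ) (i : ℕ) : Prop := s (i + 1) + 2 ≤ s i

/-- `s` has a slippery step at (0-based) column `i`, the plateau ending at
(0-based) column `m`:  `s_i - 1 = s_{i+1} = ⋯ = s_m = s_{m+1} + 1` (in 0-based
indices), with `m ≥ i + 1`. -/
def SlipAt (s : ℕ → ℕ) (i m : ℕ) : Prop :=
  i + 1 ≤ m ∧ (∀ j, i + 1 ≤ j → j ≤ m → s j + 1 = s i) ∧ s (m + 1) + 2 = s i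

/-- The transition `s →_{i+1} t` of the paper (0-based `i`): a fall from a
cliff at `i`, or a slip from a slippery step at `i` (the grain landing just
after the plateau). -/
def Step (s : ℕ → ℕ) (i : ℕ) (t : ℕ → ℕ) : Prop :=
  (Cliff s i ∧ t = moveGrain s i (i + 1)) ∨
  (∃ m, SlipAt s i m ∧ t = moveGrain s i (m + 1))

/-- The set of configurations directly reachable from `s`. -/
def dirreach (s : ℕ → ℕ) : Set (ℕ → ℕ) := {t | ∃ i, Step s i t}

/-- `s` has a (slippery, if `l ≥ 2`) plateau of length `l` at `1`:
`s_1 = s_2 = ⋯ = s_l = s_{l+1} + 1`. -/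
def SlipperyPlateau1 (s : ℕ → ℕ) (l : ℕ) : Prop :=
  (∀ j, j < l → s j = s 0) ∧ s l + 1 = s 0

/-- `s` has a non-slippery plateau at `1`:
`s_1 = ⋯ = s_l ≥ s_{l+1} + 2` for some `l ≥ 2`. -/
def NonSlipperyPlateau1 (s : ℕ → ℕ) : Prop :=
  ∃ l, 2 ≤ l ∧ (∀ j, j < l → s j = s 0) ∧ s l + 2 ≤ s 0

/-- `s` has a slippery step at `1`. -/
def SlipperyStep1 (s : ℕ → ℕ) : Prop := ∃ m, SlipAt s 0 m

/-- `s` has a non-slippery step at `1`: `s_1 = s_2 + 1` and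
`s_2 = ⋯ = s_m ≥ s_{m+1} + 2` for some `m ≥ 2` (here `m` is 0-based, `≥ 1`). -/
def NonSlipperyStep1 (s : ℕ → ℕ) : Prop :=
  s 0 = s 1 + 1 ∧ ∃ m, 1 ≤ m ∧ (∀ j, 1 ≤ j → j ≤ m → s j = s 1) ∧ s (m + 1) + 2 ≤ s 1

/-- `c` is the infimum of `a` and `b` in the dominance lattice `L_B(n)`. -/
noncomputable def IsInfOn (n : ℕ) (a b c : ℕ → ℕ) : Prop :=
  IsPartOf n c ∧ Dom a c ∧ Dom b c ∧ ∀ d, IsPartOf n d → Dom a d → Dom b d → Dom c d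

/-- `c` is the supremum of `a` and `b` in the dominance lattice `L_B(n)`. -/
noncomputable def IsSupOn (n : ℕ) (a b c : ℕ → ℕ) : Prop :=
  IsPartOf n c ∧ Dom c a ∧ Dom c b ∧ ∀ d, IsPartOf n d → Dom d a → Dom d b → Dom d c

/-- The order `≥_∞` on the set `P` of all partitions: `GeInf s t` means
`s ≥_∞ t`, i.e. every suffix sum of `s` is at most that of `t`. -/
noncomputable def GeInf (s t : ℕ → ℕ) : Prop := ∀ j, suff s j ≤ suff t j

/-- `c` is the infimum of `a` and `b` in `(P, ≥_∞)`. -/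
noncomputable def IsInfP (a b c : ℕ → ℕ) : Prop :=
  IsPartition c ∧ GeInf a c ∧ GeInf b c ∧
    ∀ d, IsPartition d → GeInf a d → GeInf b d → GeInf c d

/-- `c` is the supremum of `a` and `b` in `(P, ≥_∞)`. -/
noncomputable def IsSupP (a b c : ℕ → ℕ) : Prop :=
  IsPartition c ∧ GeInf c a ∧ GeInf c b ∧
    ∀ d, IsPartition d → GeInf d a → GeInf d b → GeInf d c

/-- The map `π`: delete the first part, `(s_1, s_2, …) ↦ (s_2, …)`. -/
def shift (s : ℕ → ℕ) : ℕ → ℕ := fun i => s (i + 1)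

/-!
The infimum in `L_B(n)` is computed prefix-sum-wise: its `j`-th prefix sum is the minimum of
those of `a` and `b`, which is again the prefix-sum sequence of a partition because the minimum
of two concave sequences is concave. Adding a grain to the first part adds `1` to every prefix
sum of positive length, and this shift commutes with taking minima.
-/

lemma psum_succ (s : ℕ → ℕ) (j : ℕ) : psum s (j + 1) = psum s j + s j :=
  Finset.sum_range_succ s j

lemma psum_mono (s : ℕ → ℕ) {j k : ℕ} (h : j ≤ k) : psum s j ≤ psum s k :=
  Finset.sum_le_sum_of_subset (Finset.range_subset_range.2 h)

lemma psum_eq_of_forall_ge_eq_zero {s : ℕ → ℕ} {N k : ℕ} (h : ∀ i, N ≤ i → s i = 0) (hk : N ≤ k) :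
    psum s k = psum s N := by
  refine (Finset.sum_subset (Finset.range_subset_range.2 hk) fun i _ hi => h i ?_).symm
  simpa using hi

lemma suff_zero_eq_psum {s : ℕ → ℕ} {N : ℕ} (h : ∀ i, N ≤ i → s i = 0) :
    suff s 0 = psum s N := by
  simp only [suff, zero_add]
  exact tsum_eq_sum (L := SummationFilter.unconditional ℕ) fun i hi => h i (by simpa using hi)

lemma IsPartOf.eventually_psum_eq {n : ℕ} {s : ℕ → ℕ} (hs : IsPartOf n s) :
    ∃ N, ∀ k, N ≤ k → psum s k = n := by
  obtain ⟨⟨_, N, hN⟩, hsum⟩ := hs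
  exact ⟨N, fun k hk => by rw [psum_eq_of_forall_ge_eq_zero hN hk, ← suff_zero_eq_psum hN, hsum]⟩

lemma psum_incr_zero_succ (s : ℕ → ℕ) (j : ℕ) :
    psum (incr s 0) (j + 1) = psum s (j + 1) + 1 := by
  simp only [psum, Finset.sum_range_succ', incr, Function.update_self,
    Function.update_of_ne (Nat.succ_ne_zero _)]
  ring

lemma isPartOf_incr_zero {n : ℕ} {s : ℕ → ℕ} (hs : IsPartOf n s) :
    IsPartOf (n + 1) (incr s 0) := by
  obtain ⟨⟨hanti, N, hN⟩, hsum⟩ := hs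
  have hN' : ∀ i, N + 1 ≤ i → incr s 0 i = 0 := fun i hi => by
    rw [incr, Function.update_of_ne (by omega)]
    exact hN i (by omega)
  refine ⟨⟨fun i => ?_, N + 1, hN'⟩, ?_⟩
  · rcases i with _ | i
    · simpa [incr] using (hanti 0).trans (Nat.le_succ _)
    · simpa [incr] using hanti (i + 1)
  · rw [suff_zero_eq_psum hN', psum_incr_zero_succ, psum_eq_of_forall_ge_eq_zero hN (Nat.le_succ N),
      ← suff_zero_eq_psum hN, hsum]

def infPart (a b : ℕ → ℕ) : ℕ → ℕ :=
  fun j => min (psum a (j + 1)) (psum b (j + 1)) - min (psum a j) (psum b j)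

lemma psum_infPart (a b : ℕ → ℕ) (j : ℕ) :
    psum (infPart a b) j = min (psum a j) (psum b j) := by
  induction j with
  | zero => simp [psum]
  | succ k ih =>
    have ha := psum_mono a (Nat.le_add_right k 1)
    have hb := psum_mono b (Nat.le_add_right k 1)
    rw [psum_succ, ih, infPart]
    omega

lemma infPart_succ_le {a b : ℕ → ℕ} (ha : ∀ i, a (i + 1) ≤ a i) (hb : ∀ i, b (i + 1) ≤ b i)
    (i : ℕ) : infPart a b (i + 1) ≤ infPart a b i := by
  have := psum_succ a i
  have := psum_succ a (i + 1)
  have := psum_succ b i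
  have := psum_succ b (i + 1)
  have := ha i
  have := hb i
  simp only [infPart]
  omega

lemma isPartOf_infPart {n : ℕ} {a b : ℕ → ℕ} (ha : IsPartOf n a) (hb : IsPartOf n b) :
    IsPartOf n (infPart a b) := by
  obtain ⟨Na, hNa⟩ := ha.eventually_psum_eq
  obtain ⟨Nb, hNb⟩ := hb.eventually_psum_eq
  have hzero : ∀ i, max Na Nb ≤ i → infPart a b i = 0 := fun i hi => by
    simp [infPart, hNa i (by omega), hNa (i + 1) (by omega), hNb i (by omega),
      hNb (i + 1) (by omega)]
  refine ⟨⟨infPart_succ_le ha.1.1 hb.1.1, _, hzero⟩, ?_⟩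
  rw [suff_zero_eq_psum hzero, psum_infPart, hNa _ (le_max_left _ _), hNb _ (le_max_right _ _),
    min_self]

lemma IsInfOn.psum_eq_min {n : ℕ} {a b c : ℕ → ℕ} (ha : IsPartOf n a) (hb : IsPartOf n b)
    (hc : IsInfOn n a b c) (j : ℕ) : psum c j = min (psum a j) (psum b j) := by
  have hle := hc.2.2.2 _ (isPartOf_infPart ha hb)
    (fun k => (psum_infPart a b k).trans_le (min_le_left _ _))
    (fun k => (psum_infPart a b k).trans_le (min_le_right _ _)) j
  rw [psum_infPart] at hle
  exact le_antisymm (le_min (hc.2.1 j) (hc.2.2.1 j)) hle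

lemma isInfOn_of_psum_eq_min {n : ℕ} {a b c : ℕ → ℕ} (hc : IsPartOf n c)
    (hmin : ∀ j, psum c j = min (psum a j) (psum b j)) : IsInfOn n a b c :=
  ⟨hc, fun j => (hmin j).trans_le (min_le_left _ _),
    fun j => (hmin j).trans_le (min_le_right _ _),
    fun _ _ hda hdb j => (hmin j).symm ▸ le_min (hda j) (hdb j)⟩

theorem stmt0_general (n : ℕ) (a b c : ℕ → ℕ)
    (ha : IsPartOf n a) (hb : IsPartOf n b) (hc : IsInfOn n a b c) :
    IsPartOf (n + 1) (incr a 0) ∧ IsPartOf (n + 1) (incr b 0) ∧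
      IsPartOf (n + 1) (incr c 0) ∧
      IsInfOn (n + 1) (incr a 0) (incr b 0) (incr c 0) := by
  refine ⟨isPartOf_incr_zero ha, isPartOf_incr_zero hb, isPartOf_incr_zero hc.1,
    isInfOn_of_psum_eq_min (isPartOf_incr_zero hc.1) fun j => ?_⟩
  rcases j with _ | j
  · simp [psum]
  · simp only [psum_incr_zero_succ, hc.psum_eq_min ha hb, min_add_add_right]

/-- For `n ≥ 1` and `a, b` partitions of `n`, `a^{↓1}`,
`b^{↓1}` and `(inf_{L_B(n)}(a,b))^{↓1}` are partitions of `n+1`, and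
`inf_{L_B(n+1)}(a^{↓1}, b^{↓1}) = (inf_{L_B(n)}(a,b))^{↓1}`. -/
theorem stmt0 (n : ℕ) (hn : 1 ≤ n) (a b c : ℕ → ℕ)
    (ha : IsPartOf n a) (hb : IsPartOf n b) (hc : IsInfOn n a b c) :
    IsPartOf (n + 1) (incr a 0) ∧ IsPartOf (n + 1) (incr b 0) ∧
      IsPartOf (n + 1) (incr c 0) ∧
      IsInfOn (n + 1) (incr a 0) (incr b 0) (incr c 0) :=
  stmt0_general n a b c ha hb hc
end

section
/- Let s be a partition having a slippery plateau of length l at 1 (l ≥ 2). Then s^{↓1} →_1 s^{↓(l+1)}, and dirreach(s^{↓1}) = dirreach(s)^{↓1} ∪ {s^{↓(l+1)}}. -/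
/-
A slippery plateau of length `l` at the first column becomes, after adding a grain there, a
slippery step whose plateau ends at column `l`; this is the only new transition, since no
transition of `s` starts at the first column (it is flat) and transitions further right do
not see the first column.
-/

section Incr

variable {s : ℕ → ℕ} {k : ℕ}

lemma incr_apply_self (s : ℕ → ℕ) (k : ℕ) : incr s k k = s k + 1 := by
  simp [incr]

lemma incr_apply_of_ne {j : ℕ} (hj : j ≠ k) : incr s k j = s j := by
  simp [incr, Function.update_of_ne hj]

lemma moveGrain_incr_self {a b : ℕ} (hab : a ≠ b) : moveGrain (incr s a) a b = incr s b := by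
  funext j
  by_cases hja : j = a
  · subst hja
    simp [moveGrain, incr_apply_self, incr_apply_of_ne hab]
  · by_cases hjb : j = b
    · subst hjb
      simp [moveGrain, hja, incr_apply_self, incr_apply_of_ne hja]
    · simp [moveGrain, hja, hjb, incr_apply_of_ne hja, incr_apply_of_ne hjb]

lemma moveGrain_incr_comm {a b : ℕ} (ha : a ≠ k) (hb : b ≠ k) :
    moveGrain (incr s k) a b = incr (moveGrain s a b) k := by
  funext j
  by_cases hjk : j = k
  · subst hjk
    simp [moveGrain, Ne.symm ha, Ne.symm hb, incr_apply_self]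
  · simp only [moveGrain, incr_apply_of_ne hjk, incr_apply_of_ne ha, incr_apply_of_ne hb]

lemma cliff_incr_iff_of_lt {i : ℕ} (hk : k < i) : Cliff (incr s k) i ↔ Cliff s i := by
  rw [Cliff, Cliff, incr_apply_of_ne (by omega), incr_apply_of_ne hk.ne']

lemma slipAt_incr_iff_of_lt {i m : ℕ} (hk : k < i) : SlipAt (incr s k) i m ↔ SlipAt s i m := by
  have hcol : ∀ j, i ≤ j → incr s k j = s j := fun j hj => incr_apply_of_ne (by omega)
  unfold SlipAt
  constructor
  · rintro ⟨him, hplat, hend⟩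
    refine ⟨him, fun j hij hjm => ?_, ?_⟩
    · simpa only [hcol j (by omega), hcol i le_rfl] using hplat j hij hjm
    · simpa only [hcol (m + 1) (by omega), hcol i le_rfl] using hend
  · rintro ⟨him, hplat, hend⟩
    refine ⟨him, fun j hij hjm => ?_, ?_⟩
    · rw [hcol j (by omega), hcol i le_rfl]
      exact hplat j hij hjm
    · rw [hcol (m + 1) (by omega), hcol i le_rfl]
      exact hend

lemma step_incr_iff_of_lt {i : ℕ} {t : ℕ → ℕ} (hk : k < i) :
    Step (incr s k) i t ↔ ∃ u, Step s i u ∧ t = incr u k := by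
  constructor
  · rintro (⟨hc, rfl⟩ | ⟨m, hm, rfl⟩)
    · exact ⟨_, Or.inl ⟨(cliff_incr_iff_of_lt hk).1 hc, rfl⟩,
        moveGrain_incr_comm hk.ne' (by omega)⟩
    · exact ⟨_, Or.inr ⟨m, (slipAt_incr_iff_of_lt hk).1 hm, rfl⟩,
        moveGrain_incr_comm hk.ne' (by have := hm.1; omega)⟩
  · rintro ⟨u, (⟨hc, rfl⟩ | ⟨m, hm, rfl⟩), rfl⟩
    · exact Or.inl ⟨(cliff_incr_iff_of_lt hk).2 hc,
        (moveGrain_incr_comm hk.ne' (by omega)).symm⟩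
    · exact Or.inr ⟨m, (slipAt_incr_iff_of_lt hk).2 hm,
        (moveGrain_incr_comm hk.ne' (by have := hm.1; omega)).symm⟩

end Incr

lemma mem_dirreach_iff_step_zero_or_succ {s t : ℕ → ℕ} :
    t ∈ dirreach s ↔ Step s 0 t ∨ ∃ i, Step s (i + 1) t := by
  constructor
  · rintro ⟨_ | i, hi⟩
    exacts [Or.inl hi, Or.inr ⟨i, hi⟩]
  · rintro (h0 | ⟨i, hi⟩)
    exacts [⟨0, h0⟩, ⟨i + 1, hi⟩]

namespace SlipperyPlateau1

variable {s : ℕ → ℕ} {l : ℕ}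

lemma not_step_zero (hp : SlipperyPlateau1 s l) (hl : 2 ≤ l) (t : ℕ → ℕ) : ¬ Step s 0 t := by
  have h1 : s 1 = s 0 := hp.1 1 (by omega)
  rintro (⟨hc, -⟩ | ⟨m, ⟨hm, hplat, -⟩, -⟩)
  · unfold Cliff at hc
    rw [zero_add] at hc
    omega
  · have := hplat 1 le_rfl hm
    omega

lemma slipAt_incr_zero_iff (hp : SlipperyPlateau1 s l) (hl : 2 ≤ l) {m : ℕ} :
    SlipAt (incr s 0) 0 m ↔ m + 1 = l := by
  obtain ⟨hplat, hend⟩ := hp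
  have hcol : ∀ j, j ≠ 0 → incr s 0 j = s j := fun j hj => incr_apply_of_ne hj
  simp only [SlipAt, incr_apply_self]
  constructor
  · rintro ⟨hm, hplat', hend'⟩
    rw [hcol (m + 1) (by omega)] at hend'
    have hml : m < l := by
      by_contra! hlm
      have := hplat' l (by omega) hlm
      rw [hcol l (by omega)] at this
      omega
    by_contra hne
    have := hplat (m + 1) (by omega)
    omega
  · rintro rfl
    refine ⟨by omega, fun j hj hjm => ?_, ?_⟩
    · rw [hcol j (by omega), hplat j (by omega)]
    · rw [hcol (m + 1) (by omega)]
      omega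

lemma step_incr_zero_iff (hp : SlipperyPlateau1 s l) (hl : 2 ≤ l) {t : ℕ → ℕ} :
    Step (incr s 0) 0 t ↔ t = incr s l := by
  have h1 : s 1 = s 0 := hp.1 1 (by omega)
  constructor
  · rintro (⟨hc, -⟩ | ⟨m, hm, rfl⟩)
    · unfold Cliff at hc
      rw [zero_add, incr_apply_of_ne one_ne_zero, incr_apply_self] at hc
      omega
    · rw [(hp.slipAt_incr_zero_iff hl).1 hm, moveGrain_incr_self (by omega)]
  · rintro rfl
    refine Or.inr ⟨l - 1, (hp.slipAt_incr_zero_iff hl).2 (by omega), ?_⟩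
    rw [Nat.sub_add_cancel (by omega), moveGrain_incr_self (by omega)]

end SlipperyPlateau1

theorem stmt4_general (s : ℕ → ℕ) (l : ℕ) (hl : 2 ≤ l)
    (hp : SlipperyPlateau1 s l) :
    Step (incr s 0) 0 (incr s l) ∧
    dirreach (incr s 0) = (fun t => incr t 0) '' dirreach s ∪ {incr s l} := by
  refine ⟨(hp.step_incr_zero_iff hl).2 rfl, ?_⟩
  ext t
  simp only [Set.mem_union, Set.mem_image, Set.mem_singleton_iff,
    mem_dirreach_iff_step_zero_or_succ, hp.step_incr_zero_iff hl, hp.not_step_zero hl,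
    false_or, step_incr_iff_of_lt (Nat.succ_pos _)]
  constructor
  · rintro (rfl | ⟨i, u, hu, rfl⟩)
    exacts [Or.inr rfl, Or.inl ⟨u, ⟨i, hu⟩, rfl⟩]
  · rintro (⟨u, ⟨i, hu⟩, rfl⟩ | rfl)
    exacts [Or.inr ⟨i, u, hu, rfl⟩, Or.inl rfl]

/-- If `s` has a slippery plateau of length `l ≥ 2` at `1`,
then `s^{↓1} →_1 s^{↓(l+1)}` and
`dirreach(s^{↓1}) = dirreach(s)^{↓1} ∪ {s^{↓(l+1)}}`. -/
theorem stmt4 (s : ℕ → ℕ) (l : ℕ) (hs : IsPartition s) (hl : 2 ≤ l)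
    (hp : SlipperyPlateau1 s l) :
    Step (incr s 0) 0 (incr s l) ∧
    dirreach (incr s 0) = (fun t => incr t 0) '' dirreach s ∪ {incr s l} :=
  stmt4_general s l hl hp
end

section
/- Let n ≥ 1. Let S (resp. T) be the set of partitions of n with a slippery (resp. non-slippery) step at 1, and for l ≥ 1 let U_l be the set of partitions s of n with s_1 = s_2 = ⋯ = s_l = s_{l+1} + 1. Then every partition of n+1 belongs to L_B(n)^{↓1} ∪ S^{↓2} ∪ T^{↓2} ∪ ⋃_{l≥1} (U_l)^{↓(l+1)}. -/
/-!
Let `l` be the last index of the top plateau `u_1 = ⋯ = u_l > u_{l+1}` of a partition `u`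
of `n + 1`. Removing one grain from column `l` leaves a partition `s` of `n` with `u = s^{↓l}`;
if `l = 1` this is the first case, otherwise `s_1 = ⋯ = s_{l-1} = s_l + 1`, so `s ∈ U_{l-1}`.
-/

lemma summable_of_eventually_zero {s : ℕ → ℕ} {N : ℕ} (h : ∀ i, N ≤ i → s i = 0) :
    Summable s :=
  summable_of_ne_finset_zero (s := Finset.range N) fun i hi => h i (by simpa using hi)

lemma suff_zero_incr {s : ℕ → ℕ} {N : ℕ} (h : ∀ i, N ≤ i → s i = 0) (i : ℕ) :
    suff (incr s i) 0 = suff s 0 + 1 := by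
  have hincr : incr s i = s + Pi.single i 1 := by
    ext j
    by_cases hj : j = i <;> simp [incr, hj]
  simp only [suff, zero_add, hincr, Pi.add_apply]
  rw [(summable_of_eventually_zero h).tsum_add (summable_of_eventually_zero (N := i + 1)
    fun j hj => Pi.single_eq_of_ne (by omega) 1), tsum_pi_single]

lemma IsPartition.antitone {u : ℕ → ℕ} (hu : IsPartition u) : Antitone u :=
  antitone_nat_of_succ_le hu.1

lemma IsPartition.update_pred {u : ℕ → ℕ} (hu : IsPartition u) {i : ℕ} (hi : u (i + 1) < u i) :
    IsPartition (Function.update u i (u i - 1)) := by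
  obtain ⟨hmono, N, hN⟩ := hu
  refine ⟨fun j => ?_, N, fun j hj => ?_⟩
  · have := hmono j
    simp only [Function.update_apply]
    split_ifs with h₁ h₂ <;> subst_vars <;> omega
  · have := hN j hj
    simp only [Function.update_apply]
    split_ifs with h <;> subst_vars <;> omega

lemma incr_update_pred {u : ℕ → ℕ} {i : ℕ} (hi : u i ≠ 0) :
    incr (Function.update u i (u i - 1)) i = u := by
  rw [incr, Function.update_self, Function.update_idem, Nat.sub_add_cancel (by omega),
    Function.update_eq_self]

lemma IsPartOf.update_pred {n : ℕ} {u : ℕ → ℕ} (hu : IsPartOf (n + 1) u) {i : ℕ}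
    (hi : u (i + 1) < u i) : IsPartOf n (Function.update u i (u i - 1)) := by
  have hs := hu.1.update_pred hi
  obtain ⟨N, hN⟩ := hs.2
  refine ⟨hs, ?_⟩
  have := suff_zero_incr hN i
  rw [incr_update_pred (by omega), hu.2] at this
  omega

lemma IsPartOf.head_ne_zero {n : ℕ} {u : ℕ → ℕ} (hu : IsPartOf (n + 1) u) : u 0 ≠ 0 := by
  intro h0
  have hzero : u = 0 := funext fun j => Nat.eq_zero_of_le_zero (h0 ▸ hu.1.antitone j.zero_le)
  have := hu.2
  simp [hzero, suff] at this

lemma IsPartition.exists_top_plateau {u : ℕ → ℕ} (hu : IsPartition u) (h0 : u 0 ≠ 0) :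
    ∃ l, (∀ j ≤ l, u j = u 0) ∧ u (l + 1) < u 0 := by
  obtain ⟨N, hN⟩ := hu.2
  have hdrop : ∃ k, u (k + 1) < u 0 := ⟨N, by rw [hN _ (by omega)]; omega⟩
  refine ⟨Nat.find hdrop, fun j hj => ?_, Nat.find_spec hdrop⟩
  rcases j with _ | j
  · rfl
  · exact le_antisymm (hu.antitone j.succ.zero_le) (not_lt.1 (Nat.find_min hdrop hj))

theorem stmt6_general (n : ℕ) (u : ℕ → ℕ) (hu : IsPartOf (n + 1) u) :
    (∃ s, IsPartOf n s ∧ u = incr s 0) ∨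
    (∃ s, IsPartOf n s ∧ SlipperyStep1 s ∧ u = incr s 1) ∨
    (∃ s, IsPartOf n s ∧ NonSlipperyStep1 s ∧ u = incr s 1) ∨
    (∃ l s, 1 ≤ l ∧ IsPartOf n s ∧ SlipperyPlateau1 s l ∧ u = incr s l) := by
  obtain ⟨l, hplateau, hdrop⟩ := hu.1.exists_top_plateau hu.head_ne_zero
  have hul := hplateau l le_rfl
  have hs := hu.update_pred (i := l) (by omega)
  have hincr := (incr_update_pred (u := u) (i := l) (by omega)).symm
  rcases Nat.eq_zero_or_pos l with rfl | hl
  · exact Or.inl ⟨_, hs, hincr⟩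
  · refine Or.inr <| Or.inr <| Or.inr ⟨l, _, hl, hs, ⟨fun j hj => ?_, ?_⟩, hincr⟩
    · simp only [Function.update_of_ne (show j ≠ l by omega),
        Function.update_of_ne (show 0 ≠ l by omega), hplateau j hj.le]
    · rw [Function.update_self, Function.update_of_ne (show 0 ≠ l by omega)]
      omega

/-- For `n ≥ 1`, every partition of `n+1` lies in
`L_B(n)^{↓1} ∪ S^{↓2} ∪ T^{↓2} ∪ ⋃_{l ≥ 1} (U_l)^{↓(l+1)}`, where `S` (resp.
`T`) is the set of partitions of `n` with a slippery (resp. non-slippery) step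
at `1`, and `U_l` is the set of partitions of `n` with
`s_1 = ⋯ = s_l = s_{l+1} + 1`. -/
theorem stmt6 (n : ℕ) (hn : 1 ≤ n) (u : ℕ → ℕ) (hu : IsPartOf (n + 1) u) :
    (∃ s, IsPartOf n s ∧ u = incr s 0) ∨
    (∃ s, IsPartOf n s ∧ SlipperyStep1 s ∧ u = incr s 1) ∨
    (∃ s, IsPartOf n s ∧ NonSlipperyStep1 s ∧ u = incr s 1) ∨
    (∃ l s, 1 ≤ l ∧ IsPartOf n s ∧ SlipperyPlateau1 s l ∧ u = incr s l) :=
  stmt6_general n u hu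
end

section
/- The partially ordered set (P, ≥_∞) is a lattice. Moreover, for s, t ∈ P, the infimum of s and t is the unique u ∈ P satisfying Σ_j(u) = max(Σ_j(s), Σ_j(t)) for every j ≥ 1 (equivalently, u_i = max(Σ_i(s), Σ_i(t)) − Σ_{i+1}(u) for all i ≥ 1); in particular such a u exists in P, i.e., this prescription defines a nonincreasing, eventually zero sequence. -/
/-!
A partition is determined by its suffix sums, and the sequences `suff u` of partitions `u` are
exactly the nonincreasing, convex, eventually zero sequences of naturals. The pointwise maximum
of two such sequences is again one, which gives the infimum. For the supremum, the common lower
bounds of `s` and `t` are closed under these infima and carry the bounded weight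
`∑_{j < N} suff d j`; a lower bound of maximal weight is therefore the greatest one.
-/

open Finset

section SuffixSums

variable {s : ℕ → ℕ}

lemma suff_eq_sum_range {N : ℕ} (hN : ∀ i, N ≤ i → s i = 0) (j : ℕ) :
    suff s j = ∑ i ∈ range N, s (j + i) :=
  tsum_eq_sum fun i hi => hN _ (by simp only [mem_range, not_lt] at hi; omega)

lemma suff_eq_zero_of_le {N : ℕ} (hN : ∀ i, N ≤ i → s i = 0) {j : ℕ} (hj : N ≤ j) :
    suff s j = 0 := by
  rw [suff_eq_sum_range hN]
  exact sum_eq_zero fun i _ => hN _ (by omega)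

lemma suff_eq_add_suff_succ (hs : ∃ N, ∀ i, N ≤ i → s i = 0) (j : ℕ) :
    suff s j = s j + suff s (j + 1) := by
  obtain ⟨N, hN⟩ := hs
  rw [suff_eq_sum_range (N := N + 1) (fun i hi => hN i (by omega)), sum_range_succ',
    suff_eq_sum_range hN, add_zero, add_comm]
  simp only [add_assoc, add_comm 1]

lemma suff_zero (j : ℕ) : suff 0 j = 0 := by
  simp [suff]

lemma isPartition_zero : IsPartition 0 :=
  ⟨fun _ => le_rfl, 0, fun _ _ => rfl⟩

lemma IsPartition.eq_of_suff_eq {t : ℕ → ℕ} (hs : IsPartition s) (ht : IsPartition t)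
    (h : ∀ j, suff s j = suff t j) : s = t := by
  funext j
  have hs' := suff_eq_add_suff_succ hs.2 j
  have ht' := suff_eq_add_suff_succ ht.2 j
  have := h j
  have := h (j + 1)
  omega

end SuffixSums

def IsConvexProfile (M : ℕ → ℕ) : Prop :=
  (∀ j, M (j + 1) ≤ M j) ∧ (∀ j, M (j + 1) + M (j + 1) ≤ M j + M (j + 2)) ∧
    ∃ N, ∀ j, N ≤ j → M j = 0

lemma IsPartition.isConvexProfile_suff {s : ℕ → ℕ} (hs : IsPartition s) :
    IsConvexProfile (suff s) := by
  obtain ⟨N, hN⟩ := hs.2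
  refine ⟨fun j => ?_, fun j => ?_, N, fun j => suff_eq_zero_of_le hN⟩
  · have := suff_eq_add_suff_succ hs.2 j
    omega
  · have := suff_eq_add_suff_succ hs.2 j
    have : suff s (j + 1) = s (j + 1) + suff s (j + 2) := suff_eq_add_suff_succ hs.2 (j + 1)
    have := hs.1 j
    omega

namespace IsConvexProfile

variable {M M' : ℕ → ℕ}

lemma sup (hM : IsConvexProfile M) (hM' : IsConvexProfile M') :
    IsConvexProfile (M ⊔ M') := by
  obtain ⟨hanti, hconv, N, hN⟩ := hM
  obtain ⟨hanti', hconv', N', hN'⟩ := hM'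
  refine ⟨fun j => max_le_max (hanti j) (hanti' j), fun j => ?_, max N N', fun j hj => ?_⟩
  · -- whichever of `M`, `M'` realises the maximum at `j + 1` witnesses convexity there
    have := hconv j
    have := hconv' j
    show max _ _ + max _ _ ≤ max _ _ + max _ _
    rcases max_choice (M (j + 1)) (M' (j + 1)) with h | h <;> rw [h] <;> omega
  · simp [hN j (le_of_max_le_left hj), hN' j (le_of_max_le_right hj)]

lemma exists_isPartition_suff_eq (hM : IsConvexProfile M) :
    ∃ u, IsPartition u ∧ ∀ j, suff u j = M j := by
  obtain ⟨hanti, hconv, N, hN⟩ := hM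
  have hu0 : ∀ i, N ≤ i → M i - M (i + 1) = 0 := fun i hi => by
    simp [hN i hi, hN (i + 1) (by omega)]
  refine ⟨fun j => M j - M (j + 1), ⟨fun j => ?_, N, hu0⟩, fun j => ?_⟩
  · show M (j + 1) - M (j + 2) ≤ M j - M (j + 1)
    have := hconv j
    have := hanti (j + 1)
    omega
  · suffices ∀ k j, N ≤ j + k → suff (fun j => M j - M (j + 1)) j = M j from
      this N j (by omega)
    intro k
    induction k with
    | zero => exact fun j hj => (suff_eq_zero_of_le hu0 hj).trans (hN j hj).symm
    | succ k ih =>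
      intro j hj
      rw [suff_eq_add_suff_succ ⟨N, hu0⟩, ih (j + 1) (by omega)]
      exact Nat.sub_add_cancel (hanti j)

end IsConvexProfile

lemma exists_isPartition_suff_eq_max {s t : ℕ → ℕ} (hs : IsPartition s) (ht : IsPartition t) :
    ∃ u, IsPartition u ∧ ∀ j, suff u j = max (suff s j) (suff t j) :=
  (hs.isConvexProfile_suff.sup ht.isConvexProfile_suff).exists_isPartition_suff_eq

lemma isInfP_of_suff_eq_max {s t u : ℕ → ℕ} (hu : IsPartition u)
    (h : ∀ j, suff u j = max (suff s j) (suff t j)) : IsInfP s t u :=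
  ⟨hu, fun j => (h j).symm ▸ le_max_left _ _, fun j => (h j).symm ▸ le_max_right _ _,
    fun _ _ hsd htd j => (h j).symm ▸ max_le (hsd j) (htd j)⟩

lemma exists_isSupP {s : ℕ → ℕ} (t : ℕ → ℕ) (hs : IsPartition s) :
    ∃ v, IsSupP s t v := by
  obtain ⟨N, hN⟩ := hs.2
  set D := {d | IsPartition d ∧ GeInf d s ∧ GeInf d t}
  set weight : (ℕ → ℕ) → ℕ := fun d => ∑ j ∈ range N, suff d j
  have hD : (weight '' D).Nonempty :=
    ⟨_, 0, ⟨isPartition_zero, fun j => by simp [suff_zero], fun j => by simp [suff_zero]⟩, rfl⟩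
  have hbdd : BddAbove (weight '' D) := by
    refine ⟨weight s, ?_⟩
    rintro _ ⟨d, hd, rfl⟩
    exact sum_le_sum fun j _ => hd.2.1 j
  obtain ⟨c, hc, hcw⟩ := Nat.sSup_mem hD hbdd
  refine ⟨c, hc.1, hc.2.1, hc.2.2, fun d hd hds hdt j => ?_⟩
  obtain ⟨u, hu, hsuff⟩ := exists_isPartition_suff_eq_max hc.1 hd
  have huD : u ∈ D := ⟨hu, fun j => (hsuff j).symm ▸ max_le (hc.2.1 j) (hds j),
    fun j => (hsuff j).symm ▸ max_le (hc.2.2 j) (hdt j)⟩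
  have hcu : ∀ j ∈ range N, suff c j ≤ suff u j := fun j _ =>
    (hsuff j).symm ▸ le_max_left _ _
  have hweight : weight c = weight u :=
    (sum_le_sum hcu).antisymm ((le_csSup hbdd ⟨u, huD, rfl⟩).trans_eq hcw.symm)
  by_cases hj : j < N
  · rw [(sum_eq_sum_iff_of_le hcu).mp hweight j (mem_range.mpr hj), hsuff]
    exact le_max_right _ _
  · exact ((hds j).trans_eq (suff_eq_zero_of_le hN (not_lt.mp hj))).trans
      (Nat.zero_le _)

/-- `(P, ≥_∞)` is a lattice: for all partitions `s, t` there
is a unique `u ∈ P` whose suffix sums are `max(Σ_j(s), Σ_j(t))`; any such `u`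
is the infimum of `s` and `t`; and a supremum exists as well. -/
theorem stmt12 :
    (∀ s t : ℕ → ℕ, IsPartition s → IsPartition t →
      ∃! u : ℕ → ℕ, IsPartition u ∧ ∀ j, suff u j = max (suff s j) (suff t j)) ∧
    (∀ s t u : ℕ → ℕ, IsPartition s → IsPartition t → IsPartition u →
      (∀ j, suff u j = max (suff s j) (suff t j)) → IsInfP s t u) ∧
    (∀ s t : ℕ → ℕ, IsPartition s → IsPartition t → ∃ v, IsSupP s t v) := by
  refine ⟨fun s t hs ht => ?_, fun s t u _ _ hu h => isInfP_of_suff_eq_max hu h,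
    fun s t hs _ => exists_isSupP t hs⟩
  obtain ⟨u, hu, hsuff⟩ := exists_isPartition_suff_eq_max hs ht
  exact ⟨u, ⟨hu, hsuff⟩, fun v ⟨hv, hvsuff⟩ =>
    hv.eq_of_suff_eq hu fun j => (hvsuff j).trans (hsuff j).symm⟩
end
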